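/- arXiv:2306.13556 — 3 statements merged into one kernel-verified Lean document; each statement's English description precedes it below -/
import Mathlib

section
/- Suppose A : ℝ → Matrix (Fin n) (Fin n) ℝ is continuous with A(t+T) = A(t), and Φ satisfies Φ' = A·Φ, Φ(0) = 1, with Φ(t) invertible for all t. Then the function t ↦ Φ(t)⁻¹ · Φ(t+T) is constant, and equals Φ(T). -/
/-! Differentiating `Φ Φ⁻¹ = 1` gives `(Φ⁻¹)' = -Φ⁻¹ A`, so by periodicity of `A`
`(Φ(t)⁻¹ Φ(t+T))' = -Φ(t)⁻¹ A(t) Φ(t+T) + Φ(t)⁻¹ A(t+T) Φ(t+T) = 0`.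
Hence `t ↦ Φ(t)⁻¹ Φ(t+T)` is constant, equal to its value `Φ(T)` at `t = 0`.
The computation works in any Banach algebra; the ℓ∞ operator norm makes the matrices one. -/
theorem HasDerivAt.ringInverse {𝕜 R : Type*} [NontriviallyNormedField 𝕜] [NormedRing R]
    [NormedAlgebra 𝕜 R] [HasSummableGeomSeries R] {f : 𝕜 → R} {f' : R} {t : 𝕜}
    (hf : HasDerivAt f f' t) (ht : IsUnit (f t)) :
    HasDerivAt (fun s => Ring.inverse (f s))
      (-(Ring.inverse (f t) * f' * Ring.inverse (f t))) t := by
  have h := (hasFDerivAt_ringInverse (𝕜 := 𝕜) ht.unit).comp_hasDerivAt t hf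
  simp only [Function.comp_def, ← Ring.inverse_unit, IsUnit.unit_spec] at h
  exact h

section Periodic

variable {𝕜 R : Type*} [RCLike 𝕜] [NormedRing R] [NormedAlgebra 𝕜 R]
  [HasSummableGeomSeries R] {A Φ : 𝕜 → R} {T : 𝕜}

theorem hasDerivAt_inverse_mul_comp_add_period (hper : ∀ t, A (t + T) = A t)
    (hunit : ∀ t, IsUnit (Φ t)) (hΦ : ∀ t, HasDerivAt Φ (A t * Φ t) t) (t : 𝕜) :
    HasDerivAt (fun s => Ring.inverse (Φ s) * Φ (s + T)) 0 t := by
  have hshift : HasDerivAt (fun s => Φ (s + T)) (A t * Φ (t + T)) t := by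
    simpa [hper] using (hΦ (t + T)).comp_add_const t T
  have hcancel :
      Ring.inverse (Φ t) * (A t * Φ t) * Ring.inverse (Φ t) = Ring.inverse (Φ t) * A t := by
    rw [mul_assoc, mul_assoc, Ring.mul_inverse_cancel _ (hunit t), mul_one]
  have h := ((hΦ t).ringInverse (hunit t)).mul hshift
  rw [hcancel, neg_mul, mul_assoc, neg_add_cancel] at h
  exact h

theorem inverse_mul_comp_add_period_eq (hper : ∀ t, A (t + T) = A t)
    (hunit : ∀ t, IsUnit (Φ t)) (hΦ : ∀ t, HasDerivAt Φ (A t * Φ t) t) (t : 𝕜) :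
    Ring.inverse (Φ t) * Φ (t + T) = Ring.inverse (Φ 0) * Φ T := by
  have hderiv := hasDerivAt_inverse_mul_comp_add_period hper hunit hΦ
  simpa using is_const_of_deriv_eq_zero (fun s => (hderiv s).differentiableAt)
    (fun s => (hderiv s).deriv) t 0

end Periodic

theorem Matrix.inv_mul_comp_add_period_eq {m 𝕜 : Type*} [Fintype m] [DecidableEq m] [RCLike 𝕜]
    {A Φ : 𝕜 → Matrix m m 𝕜} {T : 𝕜} (hper : ∀ t, A (t + T) = A t)
    (hunit : ∀ t, IsUnit (Φ t)) (hΦ : ∀ t, HasDerivAt Φ (A t * Φ t) t) (t : 𝕜) :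
    (Φ t)⁻¹ * Φ (t + T) = (Φ 0)⁻¹ * Φ T := by
  let _ := Matrix.linftyOpNormedRing (n := m) (α := 𝕜)
  let _ := Matrix.linftyOpNormedAlgebra (n := m) (R := 𝕜) (α := 𝕜)
  have _ : @CompleteSpace (Matrix m m 𝕜) Matrix.linftyOpNormedRing.toUniformSpace :=
    inferInstanceAs (CompleteSpace (m → m → 𝕜))
  simpa only [nonsing_inv_eq_ringInverse] using inverse_mul_comp_add_period_eq hper hunit hΦ t

theorem stmt_2_general {n : ℕ} (T : ℝ)
    (A Φ : ℝ → Matrix (Fin n) (Fin n) ℝ)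
    (hper : ∀ t, A (t + T) = A t)
    (h0 : Φ 0 = 1) (hunit : ∀ t, IsUnit (Φ t))
    (hΦ : ∀ t, HasDerivAt Φ (A t * Φ t) t) :
    ∀ t, (Φ t)⁻¹ * Φ (t + T) = Φ T := by
  intro t
  rw [Matrix.inv_mul_comp_add_period_eq hper hunit hΦ t, h0, inv_one, one_mul]

theorem stmt_2 {n : ℕ} (T : ℝ) (hT : 0 < T)
    (A Φ : ℝ → Matrix (Fin n) (Fin n) ℝ)
    (hA : Continuous A) (hper : ∀ t, A (t + T) = A t)
    (h0 : Φ 0 = 1) (hunit : ∀ t, IsUnit (Φ t))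
    (hΦ : ∀ t, HasDerivAt Φ (A t * Φ t) t) :
    ∀ t, (Φ t)⁻¹ * Φ (t + T) = Φ T :=
  stmt_2_general T A Φ hper h0 hunit hΦ
end

section
/- Every invertible matrix C over ℂ has a matrix logarithm: there exists a complex matrix B with exp(B) = C. -/
/-!
By Jordan–Chevalley, `C = S * (1 + N)` with `S` invertible and semisimple, `N` nilpotent and
`Commute S N`. Since `S` is diagonalizable with nonzero eigenvalues, `S = exp (q S)` for the
polynomial `q` interpolating `Complex.log` on its spectrum. For `N ^ m = 0` the truncated series
`L N = ∑_{k < m} (-1)^k N^(k+1) / (k+1)` satisfies `exp (L N) = 1 + N`: the derivative of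
`s ↦ exp (-L (s • N)) * (1 + s • N)` vanishes because `L' (s • N) * (1 + s • N) = N`. As `q S` and
`L N` commute, `exp (q S + L N) = S * (1 + N) = C`.
-/

attribute [local instance] Matrix.linftyOpNormedRing Matrix.linftyOpNormedAlgebra

open NormedSpace Polynomial Finset

section Algebra

variable {𝕂 𝔸 : Type*} [Field 𝕂] [Ring 𝔸] [Algebra 𝕂 𝔸]

variable (𝕂) in
noncomputable def logOneAddTrunc (m : ℕ) (x : 𝔸) : 𝔸 :=
  ∑ k ∈ range m, ((-1) ^ k / (k + 1) : 𝕂) • x ^ (k + 1)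

theorem Commute.logOneAddTrunc_right {x y : 𝔸} (h : Commute x y) (m : ℕ) :
    Commute x (logOneAddTrunc 𝕂 m y) :=
  .sum_right _ _ _ fun k _ => (h.pow_right (k + 1)).smul_right _

theorem mul_geom_sum_neg_smul_mul_one_add {m : ℕ} {x : 𝔸} (hx : x ^ m = 0) (t : 𝕂) :
    (x * ∑ k ∈ range m, (-(t • x)) ^ k) * (1 + t • x) = x := by
  rw [mul_assoc, ← sub_neg_eq_add, geom_sum_mul_neg, ← neg_smul, _root_.smul_pow, hx, smul_zero,
    sub_zero, mul_one]

end Algebra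

section BanachAlgebra

variable {𝕂 𝔸 : Type*} [RCLike 𝕂] [NormedRing 𝔸] [NormedAlgebra 𝕂 𝔸]

theorem hasDerivAt_logOneAddTrunc_smul (m : ℕ) (x : 𝔸) (t : 𝕂) :
    HasDerivAt (fun s : 𝕂 => logOneAddTrunc 𝕂 m (s • x)) (x * ∑ k ∈ range m, (-(t • x)) ^ k) t := by
  have hterm (k : ℕ) : HasDerivAt (fun s : 𝕂 => ((-1) ^ k / (k + 1) : 𝕂) • (s • x) ^ (k + 1))
      (x * (-(t • x)) ^ k) t := by
    simp only [_root_.smul_pow, smul_smul, ← neg_smul, mul_smul_comm, ← pow_succ']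
    refine (((hasDerivAt_pow (k + 1) t).const_mul _).smul_const _).congr_deriv ?_
    have : (k + 1 : 𝕂) ≠ 0 := Nat.cast_add_one_ne_zero k
    congr 1
    push_cast
    field_simp
    ring
  rw [mul_sum]
  exact HasDerivAt.fun_sum fun k _ => hterm k

variable [CompleteSpace 𝔸]

theorem hasDerivAt_exp_of_commute {u : 𝕂 → 𝔸} {u' : 𝔸} {t : 𝕂} (hu : HasDerivAt u u' t)
    (hcomm : ∀ s, Commute (u t) (u s)) :
    HasDerivAt (fun s => exp (u s)) (exp (u t) * u') t := by
  let +nondep : NormedAlgebra ℚ 𝔸 := .restrictScalars ℚ 𝕂 𝔸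
  have hsplit : (fun s => exp (u s)) = fun s => exp (u t) * exp (u s - u t) := by
    funext s
    rw [← exp_add_of_commute ((hcomm s).sub_right (Commute.refl _)), add_sub_cancel]
  have hincr : HasDerivAt (fun s => exp (u s - u t)) u' t := by
    have hexp : HasFDerivAt exp (1 : 𝔸 →L[𝕂] 𝔸) (u t - u t) := by
      rw [sub_self]
      exact hasFDerivAt_exp_zero
    exact hexp.comp_hasDerivAt t (hu.sub_const (u t))
  rw [hsplit]
  exact hincr.const_mul _

theorem exp_logOneAddTrunc {m : ℕ} {x : 𝔸} (hx : x ^ m = 0) :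
    exp (logOneAddTrunc 𝕂 m x) = 1 + x := by
  let +nondep : NormedAlgebra ℚ 𝔸 := .restrictScalars ℚ 𝕂 𝔸
  set L := fun s : 𝕂 => logOneAddTrunc 𝕂 m (s • x)
  have hL (s t : 𝕂) : Commute (L s) (L t) :=
    have hst : Commute (t • x) (s • x) := ((Commute.refl x).smul_left t).smul_right s
    (hst.logOneAddTrunc_right m).symm.logOneAddTrunc_right m
  have hderiv (t : 𝕂) : HasDerivAt (fun s => exp (-L s) * (1 + s • x)) 0 t := by
    have hexp := hasDerivAt_exp_of_commute (hasDerivAt_logOneAddTrunc_smul m x t).fun_neg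
      fun s => (hL t s).neg_left.neg_right
    have hlin : HasDerivAt (fun s : 𝕂 => 1 + s • x) x t := by
      simpa using ((hasDerivAt_id t).smul_const x).const_add 1
    refine (hexp.fun_mul hlin).congr_deriv ?_
    rw [mul_assoc, ← mul_add, neg_mul, mul_geom_sum_neg_smul_mul_one_add hx, neg_add_cancel,
      mul_zero]
  have hconst := is_const_of_deriv_eq_zero (fun t => (hderiv t).differentiableAt)
    (fun t => (hderiv t).deriv) 1 0
  have hzero : logOneAddTrunc 𝕂 m (0 : 𝔸) = 0 := by simp [logOneAddTrunc]
  have hinv : exp (-logOneAddTrunc 𝕂 m x) * (1 + x) = 1 := by simpa [L, hzero] using hconst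
  calc exp (logOneAddTrunc 𝕂 m x)
      = exp (logOneAddTrunc 𝕂 m x) * (exp (-logOneAddTrunc 𝕂 m x) * (1 + x)) := by
        rw [hinv, mul_one]
    _ = 1 + x := by
        rw [← mul_assoc, ← exp_add_of_commute (Commute.refl _).neg_right, add_neg_cancel, exp_zero,
          one_mul]

end BanachAlgebra

namespace Matrix

variable {m : Type*} [Fintype m] [DecidableEq m]

theorem exists_isSemisimple_mul_one_add_isNilpotent {K : Type*} [Field K] [PerfectField K]
    {C : Matrix m m K} (hC : IsUnit C) :
    ∃ S N : Matrix m m K, Module.End.IsSemisimple (toLin' S) ∧ IsUnit S ∧ IsNilpotent N ∧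
      Commute S N ∧ C = S * (1 + N) := by
  obtain ⟨ν, hν, σ, hσ, hν_nil, hσ_ss, hC_eq⟩ :=
    Module.End.exists_isNilpotent_isSemisimple (f := toLinAlgEquiv' C)
  have hνσ : Commute ν σ := Algebra.commute_of_mem_adjoin_singleton_of_commute hσ
    (Algebra.commute_of_mem_adjoin_self hν).symm
  set N₀ := toLinAlgEquiv'.symm ν
  set S := toLinAlgEquiv'.symm σ
  have hC_eq' : C = S + N₀ := by
    apply toLinAlgEquiv'.injective
    simp [S, N₀, hC_eq, add_comm]
  have hSN₀ : Commute S N₀ := (hνσ.map toLinAlgEquiv'.symm).symm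
  have hN₀ : IsNilpotent N₀ := hν_nil.map toLinAlgEquiv'.symm
  have hS : IsUnit S := by
    have hN₀C : Commute (-N₀) C := hC_eq' ▸ (hSN₀.symm.add_right (.refl N₀)).neg_left
    simpa [hC_eq'] using hN₀.neg.isUnit_add_left_of_commute hC hN₀C
  have hσS : toLin' S = σ := toLinAlgEquiv'.apply_symm_apply σ
  clear_value N₀ S
  obtain ⟨u, rfl⟩ := hS
  refine ⟨u, (↑u⁻¹ : Matrix m m K) * N₀, hσS ▸ hσ_ss, u.isUnit, ?_, ?_, ?_⟩
  · exact hSN₀.units_inv_left.isNilpotent_mul_left hN₀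
  · exact (Commute.refl _).units_inv_right.mul_right hSN₀
  · rw [hC_eq', mul_add, mul_one, ← mul_assoc, u.mul_inv, one_mul]

theorem exp_mulVec_of_mulVec_eq_smul {𝕂 : Type*} [RCLike 𝕂] {A : Matrix m m 𝕂} {v : m → 𝕂}
    {μ : 𝕂} (h : A *ᵥ v = μ • v) : exp A *ᵥ v = exp μ • v := by
  have hpow (k : ℕ) : A ^ k *ᵥ v = μ ^ k • v := by
    induction k with
    | zero => simp
    | succ k ih => rw [pow_succ', ← mulVec_mulVec, ih, mulVec_smul, h, smul_smul, ← pow_succ]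
  have hA := (exp_series_hasSum_exp' (𝕂 := 𝕂) A).map (mulVec.addMonoidHomLeft v)
    (continuous_id.matrix_mulVec continuous_const)
  have hμ := (exp_series_hasSum_exp' (𝕂 := 𝕂) μ).smul_const v
  refine hA.unique ?_
  convert hμ using 2 with k
  simp [mulVec.addMonoidHomLeft, smul_mulVec, hpow, smul_smul]

theorem toLin'_aeval {R : Type*} [CommSemiring R] (A : Matrix m m R) (p : R[X]) :
    toLin' (aeval A p) = aeval (toLin' A) p :=
  (aeval_algHom_apply (toLinAlgEquiv' : Matrix m m R ≃ₐ[R] Module.End R (m → R)) A p).symm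

theorem exists_mem_adjoin_exp_eq_of_isSemisimple {S : Matrix m m ℂ}
    (hS : Module.End.IsSemisimple (toLin' S)) (hS' : IsUnit S) :
    ∃ B ∈ Algebra.adjoin ℂ {S}, exp B = S := by
  set q := Lagrange.interpolate (minpoly ℂ S).roots.toFinset id Complex.log
  refine ⟨aeval S q, aeval_mem_adjoin_singleton ℂ S, toLin'.injective ?_⟩
  refine LinearMap.ext_on (s := ⋃ μ, (Module.End.eigenspace (toLin' S) μ : Set (m → ℂ))) ?_ ?_
  · rw [← Submodule.iSup_eq_span, hS.iSup_eigenspace_eq_top]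
  rintro v ⟨-, ⟨μ, rfl⟩, hv⟩
  obtain rfl | hv0 := eq_or_ne v 0
  · simp
  have hev : Module.End.HasEigenvector (toLin' S) μ v := ⟨hv, hv0⟩
  have hSv : S *ᵥ v = μ • v := by
    rw [← toLin'_apply]
    exact Module.End.mem_eigenspace_iff.mp hv
  have hμ : μ ≠ 0 := by
    rintro rfl
    exact hv0 (mulVec_injective_of_isUnit hS' (by rw [hSv, zero_smul, mulVec_zero]))
  have hroot : μ ∈ (minpoly ℂ S).roots.toFinset := by
    rw [Multiset.mem_toFinset, mem_roots (minpoly.ne_zero_of_finite ℂ S), ← minpoly_toLin']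
    exact Module.End.isRoot_of_hasEigenvalue (Module.End.hasEigenvalue_of_hasEigenvector hev)
  have hqv : aeval S q *ᵥ v = Complex.log μ • v := by
    rw [← toLin'_apply, toLin'_aeval, Module.End.aeval_apply_of_hasEigenvector hev]
    exact congrArg (· • v) (Lagrange.eval_interpolate_at_node _ (Set.injOn_id _) hroot)
  simp only [toLin'_apply]
  rw [exp_mulVec_of_mulVec_eq_smul hqv, ← Complex.exp_eq_exp_ℂ, Complex.exp_log hμ, hSv]

end Matrix

theorem stmt_5 {n : ℕ} (C : Matrix (Fin n) (Fin n) ℂ) (hC : IsUnit C) :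
    ∃ B : Matrix (Fin n) (Fin n) ℂ, NormedSpace.exp B = C := by
  obtain ⟨S, N, hS_ss, hS_unit, ⟨m, hm⟩, hSN, rfl⟩ :=
    Matrix.exists_isSemisimple_mul_one_add_isNilpotent hC
  obtain ⟨B, hB_mem, hB⟩ := Matrix.exists_mem_adjoin_exp_eq_of_isSemisimple hS_ss hS_unit
  have hcomm : Commute B (logOneAddTrunc ℂ m N) :=
    (Algebra.commute_of_mem_adjoin_singleton_of_commute hB_mem
      (hSN.logOneAddTrunc_right m).symm).symm
  refine ⟨B + logOneAddTrunc ℂ m N, ?_⟩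
  rw [Matrix.exp_add_of_commute _ _ hcomm, hB]
  exact congrArg (S * ·) (exp_logOneAddTrunc hm)
end

section
/- Suppose the quiescent solution is asymptotically stable, i.e. the fundamental matrix satisfies ‖Φ(t)Φ(t₀)⁻¹‖ ≤ M·exp(-α(t-t₀)) for some M, α > 0. Then for any bounded continuous f : ℝ → ℝⁿ, x(t) := ∫_{-∞}^{t} Φ(t)Φ(t')⁻¹ f(t') dt' is well-defined (the integral converges absolutely) and satisfies ẋ(t) = A(t)x(t) + f(t). -/
attribute [local instance] Matrix.linftyOpNormedRing Matrix.linftyOpNormedSpace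

/-!
Write `x t = Φ t *ᵥ g t` with `g t = ∫_{-∞}^t Φ(t')⁻¹ f(t') dt'`. The exponential bound on
`Φ(t) Φ(t')⁻¹` makes the integrand `O(exp (-α (t - t')))`, hence integrable on `(-∞, t]`; the
fundamental theorem of calculus gives `g' = Φ⁻¹ f`, and the product rule then gives
`x' = A Φ g + Φ Φ⁻¹ f = A x + f`.
-/

open MeasureTheory Set Matrix

theorem integrableOn_Iic_exp_neg_mul_sub {α : ℝ} (hα : 0 < α) (s : ℝ) :
    IntegrableOn (fun t => Real.exp (-α * (s - t))) (Iic s) := by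
  refine IntegrableOn.congr_fun ((integrableOn_exp_mul_Iic hα s).const_mul (Real.exp (-α * s)))
    (fun t _ => ?_) measurableSet_Iic
  rw [← Real.exp_add]
  ring_nf

theorem hasDerivAt_integral_Iic {E : Type*} [NormedAddCommGroup E] [NormedSpace ℝ E]
    [CompleteSpace E] {h : ℝ → E} (hc : Continuous h) (hi : ∀ s, IntegrableOn h (Iic s))
    (t : ℝ) : HasDerivAt (fun s => ∫ u in Iic s, h u) (h t) t := by
  have hsplit : (fun s => ∫ u in Iic s, h u) =
      fun s => (∫ u in Iic 0, h u) + ∫ u in (0)..s, h u := by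
    funext s
    rw [← intervalIntegral.integral_Iic_sub_Iic (hi 0) (hi s), add_sub_cancel]
  rw [hsplit]
  exact (hc.integral_hasStrictDerivAt 0 t).hasDerivAt.const_add _

theorem Continuous.matrix_inv_of_isUnit {m R X : Type*} [Fintype m] [DecidableEq m]
    [NormedCommRing R] [HasSummableGeomSeries R] [TopologicalSpace X] {Φ : X → Matrix m m R}
    (hΦ : Continuous Φ) (hunit : ∀ x, IsUnit (Φ x)) : Continuous fun x => (Φ x)⁻¹ :=
  continuous_iff_continuousAt.2 fun x =>
    (continuousAt_matrix_inv _ <| by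
      obtain ⟨u, hu⟩ := (isUnit_iff_isUnit_det _).1 (hunit x)
      exact hu ▸ NormedRing.inverse_continuousAt u).comp hΦ.continuousAt

section

variable {m : Type*} [Fintype m]

theorem Matrix.isBoundedBilinearMap_mulVec [DecidableEq m] :
    IsBoundedBilinearMap ℝ fun p : Matrix m m ℝ × (m → ℝ) => p.1 *ᵥ p.2 :=
  { add_left := fun _ _ _ => add_mulVec _ _ _
    smul_left := fun _ _ _ => smul_mulVec _ _ _
    add_right := fun _ _ _ => mulVec_add _ _ _
    smul_right := fun _ _ _ => mulVec_smul _ _ _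
    bound := ⟨1, one_pos, fun P v => by simpa using linfty_opNorm_mulVec P v⟩ }

theorem HasDerivAt.matrix_mulVec [DecidableEq m] {Φ : ℝ → Matrix m m ℝ} {g : ℝ → m → ℝ}
    {Φ' : Matrix m m ℝ} {g' : m → ℝ} {t : ℝ} (hΦ : HasDerivAt Φ Φ' t) (hg : HasDerivAt g g' t) :
    HasDerivAt (fun s => Φ s *ᵥ g s) (Φ t *ᵥ g' + Φ' *ᵥ g t) t :=
  ContinuousLinearMap.hasDerivAt_of_bilinear
    (B := isBoundedBilinearMap_mulVec.toContinuousLinearMap) (fun _ => hΦ) (fun _ => hg)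

theorem MeasureTheory.Integrable.matrix_mulVec_const {X : Type*} [MeasurableSpace X]
    {μ : Measure X} (P : Matrix m m ℝ) {v : X → m → ℝ} (hv : Integrable v μ) :
    Integrable (fun x => P *ᵥ v x) μ :=
  (mulVecLin P).toContinuousLinearMap.integrable_comp hv

theorem Matrix.mulVec_integral {X : Type*} [MeasurableSpace X]
    {μ : Measure X} (P : Matrix m m ℝ) {v : X → m → ℝ} (hv : Integrable v μ) :
    P *ᵥ ∫ x, v x ∂μ = ∫ x, P *ᵥ v x ∂μ :=
  ((mulVecLin P).toContinuousLinearMap.integral_comp_comm hv).symm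

theorem integrableOn_Iic_mulVec_of_norm_le_exp [DecidableEq m] {P : ℝ → Matrix m m ℝ}
    {v : ℝ → m → ℝ} {s M α C : ℝ} (hα : 0 < α) (hP : Continuous P) (hv : Continuous v)
    (hPb : ∀ t ≤ s, ‖P t‖ ≤ M * Real.exp (-α * (s - t))) (hvb : ∀ t, ‖v t‖ ≤ C) :
    IntegrableOn (fun t => P t *ᵥ v t) (Iic s) := by
  have hC : 0 ≤ C := (norm_nonneg _).trans (hvb s)
  refine Integrable.mono' ((integrableOn_Iic_exp_neg_mul_sub hα s).const_mul (M * C))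
    (hP.matrix_mulVec hv).aestronglyMeasurable.restrict
    (ae_restrict_of_forall_mem measurableSet_Iic fun t ht => ?_)
  calc ‖P t *ᵥ v t‖ ≤ ‖P t‖ * ‖v t‖ := linfty_opNorm_mulVec _ _
    _ ≤ M * Real.exp (-α * (s - t)) * C :=
        mul_le_mul (hPb t ht) (hvb t) (norm_nonneg _) ((norm_nonneg _).trans (hPb t ht))
    _ = M * C * Real.exp (-α * (s - t)) := by ring

theorem hasDerivAt_mulVec_integral_Iic_inv_mulVec [DecidableEq m] {A Φ : ℝ → Matrix m m ℝ}
    {f : ℝ → m → ℝ} (hΦ : ∀ t, HasDerivAt Φ (A t * Φ t) t) (hunit : ∀ t, IsUnit (Φ t))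
    (hf : Continuous f) (hint : ∀ s, IntegrableOn (fun t => (Φ t)⁻¹ *ᵥ f t) (Iic s)) (t : ℝ) :
    HasDerivAt (fun s => Φ s *ᵥ ∫ u in Iic s, (Φ u)⁻¹ *ᵥ f u)
      (A t *ᵥ (Φ t *ᵥ ∫ u in Iic t, (Φ u)⁻¹ *ᵥ f u) + f t) t := by
  have hΦc : Continuous Φ := continuous_iff_continuousAt.2 fun t => (hΦ t).continuousAt
  have hg := hasDerivAt_integral_Iic ((hΦc.matrix_inv_of_isUnit hunit).matrix_mulVec hf) hint t
  convert (hΦ t).matrix_mulVec hg using 1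
  rw [mulVec_mulVec, mulVec_mulVec, mul_nonsing_inv _ ((isUnit_iff_isUnit_det _).1 (hunit t)),
    one_mulVec, add_comm]

end

theorem stmt_15_general {n : ℕ} (A Φ : ℝ → Matrix (Fin n) (Fin n) ℝ)
    (hΦ : ∀ t, HasDerivAt Φ (A t * Φ t) t)
    (hunit : ∀ t, IsUnit (Φ t))
    (M α : ℝ) (hα : 0 < α)
    (hbound : ∀ t₀ t : ℝ, t₀ ≤ t → ‖Φ t * (Φ t₀)⁻¹‖ ≤ M * Real.exp (-α * (t - t₀)))
    (f : ℝ → Fin n → ℝ) (hfc : Continuous f)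
    (Cf : ℝ) (hfb : ∀ t, ‖f t‖ ≤ Cf)
    (x : ℝ → Fin n → ℝ)
    (hx : ∀ t, x t = ∫ t' in Set.Iic t, (Φ t * (Φ t')⁻¹).mulVec (f t')) :
    (∀ t, MeasureTheory.IntegrableOn
        (fun t' => (Φ t * (Φ t')⁻¹).mulVec (f t')) (Set.Iic t)) ∧
    ∀ t, HasDerivAt x ((A t).mulVec (x t) + f t) t := by
  have hΦinv : Continuous fun t => (Φ t)⁻¹ :=
    (continuous_iff_continuousAt.2 fun t => (hΦ t).continuousAt).matrix_inv_of_isUnit hunit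
  have hint : ∀ t, IntegrableOn (fun t' => (Φ t * (Φ t')⁻¹) *ᵥ f t') (Iic t) := fun t =>
    integrableOn_Iic_mulVec_of_norm_le_exp hα (continuous_const.mul hΦinv) hfc
      (fun t' ht' => hbound t' t ht') hfb
  have hint_inv : ∀ s, IntegrableOn (fun t' => (Φ t')⁻¹ *ᵥ f t') (Iic s) := fun s =>
    IntegrableOn.congr_fun ((hint s).matrix_mulVec_const (Φ s)⁻¹) (fun t' _ => by
      rw [mulVec_mulVec, ← Matrix.mul_assoc,
        nonsing_inv_mul _ ((isUnit_iff_isUnit_det _).1 (hunit s)), Matrix.one_mul])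
      measurableSet_Iic
  have hx_eq : x = fun s => Φ s *ᵥ ∫ u in Iic s, (Φ u)⁻¹ *ᵥ f u := by
    funext s
    simp_rw [hx, mulVec_integral _ (hint_inv s), mulVec_mulVec]
  refine ⟨hint, fun t => ?_⟩
  rw [hx_eq]
  exact hasDerivAt_mulVec_integral_Iic_inv_mulVec hΦ hunit hfc hint_inv t

theorem stmt_15 {n : ℕ} (A Φ : ℝ → Matrix (Fin n) (Fin n) ℝ)
    (hA : Continuous A)
    (hΦ : ∀ t, HasDerivAt Φ (A t * Φ t) t)
    (hunit : ∀ t, IsUnit (Φ t))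
    (M α : ℝ) (hM : 0 < M) (hα : 0 < α)
    (hbound : ∀ t₀ t : ℝ, t₀ ≤ t → ‖Φ t * (Φ t₀)⁻¹‖ ≤ M * Real.exp (-α * (t - t₀)))
    (f : ℝ → Fin n → ℝ) (hfc : Continuous f)
    (Cf : ℝ) (hfb : ∀ t, ‖f t‖ ≤ Cf)
    (x : ℝ → Fin n → ℝ)
    (hx : ∀ t, x t = ∫ t' in Set.Iic t, (Φ t * (Φ t')⁻¹).mulVec (f t')) :
    (∀ t, MeasureTheory.IntegrableOn
        (fun t' => (Φ t * (Φ t')⁻¹).mulVec (f t')) (Set.Iic t)) ∧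
    ∀ t, HasDerivAt x ((A t).mulVec (x t) + f t) t :=
  stmt_15_general A Φ hΦ hunit M α hα hbound f hfc Cf hfb x hx
end
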